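/- In a round of a 2-tag system acting on a word of even length 2m in which the rules map each undotted symbol to a fresh pair (one undotted then one dotted symbol) and delete nothing else, the read positions during the round are exactly the odd positions 1, 3, 5, …, 2m−1 of the original word; consequently after the round the dataword consists of the m images of the odd-position symbols, and the parity (read symbol undotted) is preserved. -/
import Mathlib


/-- Step function of a 2-tag system over undotted/dotted symbols (a symbol is
a pair of a base symbol and a dottedness flag) whose rule sends each undotted
symbol σ to the fresh pair (g σ)(ġ σ) and each dotted symbol to ε. -/
def roundStep {α : Type*} (g : α → α) : List (α × Bool) → List (α × Bool)
  | a :: _ :: t => t ++ (if a.2 then [] else [(g a.1, false), (g a.1, true)])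
  | w => w

private lemma roundStep_iter {α : Type*} (g : α → α) :
    ∀ (l : List α) (s : List (α × Bool)),
      (roundStep g)^[l.length] ((l.flatMap fun σ => [(σ, false), (σ, true)]) ++ s) =
        s ++ (l.map g).flatMap (fun σ => [(σ, false), (σ, true)])
  | [], s => by simp
  | a :: l, s => by
    rw [List.length_cons, Function.iterate_succ_apply]
    have h1 : roundStep g (((a :: l).flatMap fun σ => [(σ, false), (σ, true)]) ++ s)
        = (l.flatMap fun σ => [(σ, false), (σ, true)]) ++
          (s ++ [(g a, false), (g a, true)]) := by
      simp [roundStep]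
    rw [h1, roundStep_iter g l (s ++ [(g a, false), (g a, true)])]
    simp

/-- In a round on a word of even length 2m made of alternating undotted-dotted
pairs, the symbols read are exactly the m undotted symbols at the odd
(1-indexed) positions, and after the round the dataword consists of the m
images of those symbols (again as alternating undotted-dotted pairs), so the
parity (leftmost symbol undotted) is preserved. -/
theorem stmt18 {α : Type*} (g : α → α) (pairs : List α) :
    let w : List (α × Bool) := pairs.flatMap fun σ => [(σ, false), (σ, true)]
    (∀ j < pairs.length,
      ((roundStep g)^[j] w).head? = (pairs[j]?).map (fun σ => (σ, false))) ∧
    (roundStep g)^[pairs.length] w =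
      (pairs.map g).flatMap (fun σ => [(σ, false), (σ, true)]) := by
  intro w
  constructor
  · intro j hj
    have hsplit : w = ((pairs.take j).flatMap fun σ => [(σ, false), (σ, true)]) ++
        ((pairs.drop j).flatMap fun σ => [(σ, false), (σ, true)]) := by
      simp [w, ← List.flatMap_append]
    have hlen : (pairs.take j).length = j := by
      simp [Nat.le_of_lt hj]
    have := roundStep_iter g (pairs.take j)
      ((pairs.drop j).flatMap fun σ => [(σ, false), (σ, true)])
    rw [hlen] at this
    rw [hsplit, this]
    have hd : pairs.drop j = pairs[j] :: pairs.drop (j + 1) :=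
      (List.drop_eq_getElem_cons hj)
    rw [List.getElem?_eq_getElem hj, Option.map_some, List.head?_append_of_ne_nil]
    · rw [hd, List.flatMap_cons]; rfl
    · rw [hd, List.flatMap_cons]; simp
  · have := roundStep_iter g pairs []
    simpa using this
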